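/- Let g_L be the left ESFR correction function with parameter η = 0 and degree p ≥ 1. Then for every polynomial φ of degree at most p, ∫_{−1}^{1} g_L'(r) φ(r) dr = −φ(−1). -/

import Mathlib

/-- The degree-`p` Legendre polynomial via the Rodrigues formula. -/
noncomputable def legendre (p : ℕ) (r : ℝ) : ℝ :=
  (1 / ((2:ℝ)^p * (Nat.factorial p))) * iteratedDeriv p (fun x : ℝ => (x^2 - 1)^p) r


/-- Left ESFR correction function with parameter `η`. -/
noncomputable def gL (p : ℕ) (η r : ℝ) : ℝ :=
  ((-1:ℝ)^p / 2) *
    (legendre p r - (η * legendre (p-1) r + legendre (p+1) r) / (1 + η))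

/-- Right ESFR correction function with parameter `η`. -/
noncomputable def gR (p : ℕ) (η r : ℝ) : ℝ :=
  (1/2 : ℝ) *
    (legendre p r + (η * legendre (p-1) r + legendre (p+1) r) / (1 + η))

/-!
`g_L` is the polynomial `((-1)^p/2) (P_p - P_{p+1})`, so `g_L(1) = 0` and `g_L(-1) = 1`.
By Rodrigues' formula `P_n ∝ D^n (x^2 - 1)^n` and `n`-fold integration by parts, whose boundary
terms vanish because `(x^2 - 1)^n` has zeros of order `n` at `±1`, `P_n` and `P_{n+1}`, hence
`g_L`, are orthogonal on `[-1, 1]` to every polynomial of degree `< p`. One more integration by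
parts gives `∫ g_L' φ = [g_L φ]_{-1}^{1} - ∫ g_L φ' = -φ(-1)`, since `φ'` has degree `< p`.
-/

open Polynomial

theorem Polynomial.iteratedDeriv_eval {𝕜 : Type*} [NontriviallyNormedField 𝕜] (q : 𝕜[X])
    (k : ℕ) : iteratedDeriv k (fun x => q.eval x) = fun x => (derivative^[k] q).eval x := by
  induction k with
  | zero => simp
  | succ k ih =>
    rw [iteratedDeriv_succ, ih, Function.iterate_succ_apply']
    funext x
    exact Polynomial.deriv _

theorem Polynomial.integral_derivative_mul_eq (A B : ℝ[X]) (a b : ℝ) :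
    ∫ x in a..b, (derivative A).eval x * B.eval x
      = A.eval b * B.eval b - A.eval a * B.eval a
        - ∫ x in a..b, A.eval x * (derivative B).eval x := by
  have h := intervalIntegral.integral_mul_deriv_eq_deriv_mul
    (fun x _ => A.hasDerivAt x) (fun x _ => B.hasDerivAt x)
    ((derivative A).continuous.intervalIntegrable a b)
    ((derivative B).continuous.intervalIntegrable a b)
  linarith

theorem Polynomial.integral_iterate_derivative_mul_eq {a b : ℝ} (n : ℕ) (W ψ : ℝ[X])
    (hW : ∀ k < n, (derivative^[k] W).eval a = 0 ∧ (derivative^[k] W).eval b = 0) :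
    ∫ x in a..b, (derivative^[n] W).eval x * ψ.eval x
      = (-1) ^ n * ∫ x in a..b, W.eval x * (derivative^[n] ψ).eval x := by
  induction n generalizing W with
  | zero => simp
  | succ n ih =>
    have hDW : ∀ k < n, (derivative^[k] (derivative W)).eval a = 0 ∧
        (derivative^[k] (derivative W)).eval b = 0 := fun k hk => by
      simpa only [← Function.iterate_succ_apply] using hW (k + 1) (by omega)
    obtain ⟨hWa, hWb⟩ := hW 0 n.succ_pos
    rw [Function.iterate_succ_apply, ih _ hDW, integral_derivative_mul_eq,
      ← Function.iterate_succ_apply' derivative]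
    simp only [Function.iterate_zero_apply] at hWa hWb
    rw [hWa, hWb]
    ring

section SquareRootsOfOne

variable {R : Type*} [CommRing R] {t : R}

theorem Polynomial.X_sq_sub_one_pow_eq (ht : t ^ 2 = 1) (n : ℕ) :
    ((X : R[X]) ^ 2 - 1) ^ n = (X - C t) ^ n * (X + C t) ^ n := by
  rw [← mul_pow, mul_comm, ← sq_sub_sq, ← C_pow, ht, C_1]

theorem Polynomial.eval_iterate_derivative_X_sq_sub_one_pow_of_lt (ht : t ^ 2 = 1)
    {n k : ℕ} (hk : k < n) : (derivative^[k] (((X : R[X]) ^ 2 - 1) ^ n)).eval t = 0 := by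
  rw [← coe_aeval_eq_eval]
  exact aeval_iterate_derivative_of_lt _ n t
    (by rw [Algebra.algebraMap_self, map_id, X_sq_sub_one_pow_eq ht]) hk

theorem Polynomial.eval_iterate_derivative_X_sq_sub_one_pow_self (ht : t ^ 2 = 1) (n : ℕ) :
    (derivative^[n] (((X : R[X]) ^ 2 - 1) ^ n)).eval t = n.factorial * (2 * t) ^ n := by
  rw [← coe_aeval_eq_eval, aeval_iterate_derivative_self _ n t (p' := (X + C t) ^ n)
    (by rw [Algebra.algebraMap_self, map_id, X_sq_sub_one_pow_eq ht])]
  simp [two_mul]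

end SquareRootsOfOne

noncomputable def legendrePoly (n : ℕ) : ℝ[X] :=
  C (1 / (2 ^ n * n.factorial : ℝ)) * derivative^[n] (((X : ℝ[X]) ^ 2 - 1) ^ n)

theorem legendre_eq_eval (n : ℕ) : legendre n = fun r => (legendrePoly n).eval r := by
  have hW : (fun x : ℝ => (x ^ 2 - 1) ^ n) = fun x => (((X : ℝ[X]) ^ 2 - 1) ^ n).eval x := by
    simp
  funext r
  simp [legendre, legendrePoly, hW, iteratedDeriv_eval]

theorem legendrePoly_eval_of_sq_eq_one {t : ℝ} (ht : t ^ 2 = 1) (n : ℕ) :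
    (legendrePoly n).eval t = t ^ n := by
  rw [legendrePoly, eval_mul, eval_C, eval_iterate_derivative_X_sq_sub_one_pow_self ht]
  field_simp
  ring

theorem integral_legendrePoly_mul_eq_zero (n : ℕ) {ψ : ℝ[X]} (hψ : ψ.degree < n) :
    ∫ x in (-1 : ℝ)..1, (legendrePoly n).eval x * ψ.eval x = 0 := by
  have hW : ∀ k < n, (derivative^[k] (((X : ℝ[X]) ^ 2 - 1) ^ n)).eval (-1) = 0 ∧
      (derivative^[k] (((X : ℝ[X]) ^ 2 - 1) ^ n)).eval 1 = 0 := fun k hk =>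
    ⟨eval_iterate_derivative_X_sq_sub_one_pow_of_lt (by norm_num) hk,
      eval_iterate_derivative_X_sq_sub_one_pow_of_lt (by norm_num) hk⟩
  simp only [legendrePoly, eval_mul, eval_C, mul_assoc]
  rw [intervalIntegral.integral_const_mul, integral_iterate_derivative_mul_eq n _ ψ hW,
    iterate_derivative_eq_zero_of_degree_lt hψ]
  simp

noncomputable def gLPoly (p : ℕ) : ℝ[X] :=
  C ((-1) ^ p / 2) * (legendrePoly p - legendrePoly (p + 1))

theorem gL_zero_eq_eval (p : ℕ) : gL p 0 = fun r => (gLPoly p).eval r := by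
  funext r
  simp [gL, gLPoly, legendre_eq_eval]

theorem gLPoly_eval_one (p : ℕ) : (gLPoly p).eval 1 = 0 := by
  simp [gLPoly, legendrePoly_eval_of_sq_eq_one]

theorem gLPoly_eval_neg_one (p : ℕ) : (gLPoly p).eval (-1) = 1 := by
  simp only [gLPoly, eval_mul, eval_C, eval_sub,
    legendrePoly_eval_of_sq_eq_one (t := -1) (by norm_num), pow_succ]
  have h : ((-1 : ℝ) ^ p) * (-1) ^ p = 1 := by rw [← mul_pow]; norm_num
  linear_combination h

theorem integral_gLPoly_mul_eq_zero (p : ℕ) {ψ : ℝ[X]} (hψ : ψ.degree < p) :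
    ∫ x in (-1 : ℝ)..1, (gLPoly p).eval x * ψ.eval x = 0 := by
  have hψ' : ψ.degree < ↑(p + 1) := hψ.trans (by exact_mod_cast p.lt_succ_self)
  simp only [gLPoly, eval_mul, eval_C, eval_sub, mul_assoc, sub_mul,
    intervalIntegral.integral_const_mul]
  rw [intervalIntegral.integral_sub (f := fun x => (legendrePoly p).eval x * ψ.eval x)
    (g := fun x => (legendrePoly (p + 1)).eval x * ψ.eval x)
    (((legendrePoly p).continuous.mul ψ.continuous).intervalIntegrable _ _)
    (((legendrePoly (p + 1)).continuous.mul ψ.continuous).intervalIntegrable _ _),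
    integral_legendrePoly_mul_eq_zero p hψ, integral_legendrePoly_mul_eq_zero (p + 1) hψ']
  simp

theorem gL_DG_lifting_general (p : ℕ)
    (φ : Polynomial ℝ) (hφ : φ.degree ≤ (p : ℕ)) :
    ∫ r in (-1:ℝ)..1, deriv (gL p 0) r * φ.eval r = - φ.eval (-1) := by
  have hdφ : (derivative φ).degree < p := by
    rcases eq_or_ne φ 0 with rfl | hφ0
    · simp
    · exact (degree_derivative_lt hφ0).trans_le hφ
  simp only [gL_zero_eq_eval, Polynomial.deriv]
  rw [integral_derivative_mul_eq, integral_gLPoly_mul_eq_zero p hdφ, gLPoly_eval_one,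
    gLPoly_eval_neg_one]
  ring

open Polynomial in
theorem gL_DG_lifting (p : ℕ) (hp : 1 ≤ p)
    (φ : Polynomial ℝ) (hφ : φ.degree ≤ (p : ℕ)) :
    ∫ r in (-1:ℝ)..1, deriv (gL p 0) r * φ.eval r = - φ.eval (-1) :=
  gL_DG_lifting_general p φ hφ
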